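/- arXiv:1612.02684 — 3 statements merged into one kernel-verified Lean document; each statement's English description precedes it below -/
import Mathlib

section
/- There exist a concurrent epistemic game structure M, an agent a, a set of states P ⊆ St, and a state q such that M,q ⊨ ⟨⟨{a}⟩⟩◇P, yet q does not belong to the least fixpoint of the monotone operator X ↦ K_a P ∪ ⟨{a}⟩X. (The converse of the singleton-coalition lower bound does not universally hold.) -/
/-- A concurrent epistemic game structure (iCGS). -/
structure CEGS where
  Agt : Type
  St : Type
  AP : Type
  Act : Type
  agtFin : Finite Agt
  agtNe : Nonempty Agt
  stNe : Nonempty St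
  actFin : Finite Act
  actNe : Nonempty Act
  V : AP → Set St
  d : Agt → St → Set Act
  d_ne : ∀ a q, (d a q).Nonempty
  o : St → (Agt → Act) → St
  sim : Agt → St → St → Prop
  sim_equiv : ∀ a, Equivalence (sim a)
  uniform : ∀ a q q', sim a q q' → d a q = d a q'

namespace CEGS

variable (M : CEGS)

/-- An action profile available at state `q`. -/
def Avail (q : M.St) (α : M.Agt → M.Act) : Prop := ∀ a, α a ∈ M.d a q

/-- A path: an infinite sequence of states, each next state being the outcome of
some available action profile. -/
def IsPath (lam : ℕ → M.St) : Prop :=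
  ∀ i, ∃ α, M.Avail (lam i) α ∧ lam (i + 1) = M.o (lam i) α

/-- `s` is a collective ir-strategy (uniform, memoryless) for coalition `A`. -/
def IsIrStrat (A : Set M.Agt) (s : M.Agt → M.St → M.Act) : Prop :=
  ∀ a ∈ A, (∀ q, s a q ∈ M.d a q) ∧ (∀ q q', M.sim a q q' → s a q = s a q')

/-- `s` is a collective Ir-strategy (perfect information, memoryless) for coalition `A`. -/
def IsIrStratPI (A : Set M.Agt) (s : M.Agt → M.St → M.Act) : Prop :=
  ∀ a ∈ A, ∀ q, s a q ∈ M.d a q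

/-- `lam ∈ out(q, s_A)`: a path starting at `q` along which every agent of `A` plays `s`. -/
def InOut (A : Set M.Agt) (s : M.Agt → M.St → M.Act) (q : M.St) (lam : ℕ → M.St) : Prop :=
  lam 0 = q ∧ ∀ i, ∃ α, M.Avail (lam i) α ∧ (∀ a ∈ A, α a = s a (lam i)) ∧
    lam (i + 1) = M.o (lam i) α

/-- `lam ∈ out^ir(q, s_A) = ⋃_{a∈A} ⋃_{q ∼_a q'} out(q', s_A)`. -/
def InOutIr (A : Set M.Agt) (s : M.Agt → M.St → M.Act) (q : M.St) (lam : ℕ → M.St) : Prop :=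
  ∃ a ∈ A, ∃ q', M.sim a q q' ∧ M.InOut A s q' lam

/-- The "everybody knows" relation `∼_A^E = ⋃_{a∈A} ∼_a`. -/
def simE (A : Set M.Agt) (q q' : M.St) : Prop := ∃ a ∈ A, M.sim a q q'

/-- The "common knowledge" relation `∼_A^C`: transitive closure of `∼_A^E`. -/
def simC (A : Set M.Agt) : M.St → M.St → Prop := Relation.TransGen (M.simE A)

/-- Individual knowledge: `K_a X`. -/
def Know (a : M.Agt) (X : Set M.St) : Set M.St := {q | ∀ q', M.sim a q q' → q' ∈ X}

/-- Mutual knowledge: `E_A X`. -/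
def EKnow (A : Set M.Agt) (X : Set M.St) : Set M.St := {q | ∀ q', M.simE A q q' → q' ∈ X}

/-- Common knowledge: `C_A X`. -/
def CKnow (A : Set M.Agt) (X : Set M.St) : Set M.St := {q | ∀ q', M.simC A q q' → q' ∈ X}

/-- Next-step operator `⟨A⟩X` (imperfect information). -/
def Next (A : Set M.Agt) (X : Set M.St) : Set M.St :=
  {q | ∃ s, M.IsIrStrat A s ∧ ∀ lam, M.InOutIr A s q lam → lam 1 ∈ X}

/-- `Reach_M(s_A, Q, X)`. -/
def ReachSet (A : Set M.Agt) (s : M.Agt → M.St → M.Act) (Q X : Set M.St) : Set M.St :=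
  {q | q ∈ Q ∧ ∀ lam, M.InOut A s q lam → ∃ i, lam i ∈ X ∧ ∀ j < i, lam j ∈ Q}

/-- Steadfast next-step operator `⟨A⟩•X`. -/
def NextStead (A : Set M.Agt) (X : Set M.St) : Set M.St :=
  {q | ∃ s, M.IsIrStrat A s ∧
    M.ReachSet A s {q' | M.simC A q q'} X = {q' | M.simC A q q'}}

/-- `M,q ⊨ ⟨⟨A⟩⟩◇P` (ATLir reachability, ir-strategies). -/
def CanReach (A : Set M.Agt) (P : Set M.St) (q : M.St) : Prop :=
  ∃ s, M.IsIrStrat A s ∧ ∀ lam, M.InOutIr A s q lam → ∃ i, lam i ∈ P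

/-- `M,q ⊨ ⟨⟨A⟩⟩□P` (ATLir safety, ir-strategies). -/
def CanGlobally (A : Set M.Agt) (P : Set M.St) (q : M.St) : Prop :=
  ∃ s, M.IsIrStrat A s ∧ ∀ lam, M.InOutIr A s q lam → ∀ i, lam i ∈ P

/-- `M,q ⊨ ⟨⟨A⟩⟩ S U P` (ATLir until, ir-strategies). -/
def CanUntil (A : Set M.Agt) (S P : Set M.St) (q : M.St) : Prop :=
  ∃ s, M.IsIrStrat A s ∧ ∀ lam, M.InOutIr A s q lam →
    ∃ i, lam i ∈ P ∧ ∀ j < i, lam j ∈ S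

/-- Perfect-information next-step operator `N^Ir_A(X)`. -/
def NextPI (A : Set M.Agt) (X : Set M.St) : Set M.St :=
  {q | ∃ t, M.IsIrStratPI A t ∧ ∀ lam, M.InOut A t q lam → lam 1 ∈ X}

/-- Perfect-information "globally" operator `G^Ir_A(X)`. -/
def GloballyPI (A : Set M.Agt) (X : Set M.St) : Set M.St :=
  {q | ∃ t, M.IsIrStratPI A t ∧ ∀ lam, M.InOut A t q lam → ∀ i, lam i ∈ X}

/-- Perfect-information "until" operator `U^Ir_A(Y, X)`. -/
def UntilPI (A : Set M.Agt) (Y X : Set M.St) : Set M.St :=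
  {q | ∃ t, M.IsIrStratPI A t ∧ ∀ lam, M.InOut A t q lam →
    ∃ i, lam i ∈ X ∧ ∀ j < i, lam j ∈ Y}

end CEGS

/-- Knaster–Tarski least fixpoint of a set operator. -/
def lfpSet {σ : Type} (f : Set σ → Set σ) : Set σ := sInf {X | f X ⊆ X}

/-- Knaster–Tarski greatest fixpoint of a set operator. -/
def gfpSet {σ : Type} (f : Set σ → Set σ) : Set σ := sSup {X | X ⊆ f X}

/-! The agent cannot tell the two states of `blindCEGS` apart and every move leads to `true`:
it reaches `P = {true}` after one step whatever it does, but it never knows that `P` holds.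
So `K_a P = ∅`, and since every state has a successor also `⟨a⟩∅ = ∅`; hence `∅` is a
prefixed point of `X ↦ K_a P ∪ ⟨a⟩X` and the least fixpoint is empty. -/

theorem lfpSet_subset_of_map_subset {σ : Type} {f : Set σ → Set σ} {X : Set σ}
    (h : f X ⊆ X) : lfpSet f ⊆ X :=
  sInf_le h

theorem lfpSet_eq_empty_of_map_empty {σ : Type} {f : Set σ → Set σ} (h : f ∅ = ∅) :
    lfpSet f = ∅ :=
  Set.subset_empty_iff.mp (lfpSet_subset_of_map_subset h.subset)

namespace CEGS

variable (M : CEGS)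

theorem exists_avail_of_isIrStrat {A : Set M.Agt} {s : M.Agt → M.St → M.Act}
    (hs : M.IsIrStrat A s) (q : M.St) : ∃ α, M.Avail q α ∧ ∀ a ∈ A, α a = s a q := by
  classical
  refine ⟨fun a => if a ∈ A then s a q else (M.d_ne a q).some, fun a => ?_, fun a ha => if_pos ha⟩
  by_cases ha : a ∈ A
  · simpa only [if_pos ha] using (hs a ha).1 q
  · simpa only [if_neg ha] using (M.d_ne a q).some_mem

theorem exists_inOut_of_isIrStrat {A : Set M.Agt} {s : M.Agt → M.St → M.Act}
    (hs : M.IsIrStrat A s) (q : M.St) : ∃ lam, M.InOut A s q lam := by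
  choose α hα using M.exists_avail_of_isIrStrat hs
  exact ⟨fun n => Nat.rec q (fun _ p => M.o p (α p)) n, rfl,
    fun i => ⟨_, (hα _).1, (hα _).2, rfl⟩⟩

theorem next_empty {A : Set M.Agt} (hA : A.Nonempty) : M.Next A ∅ = ∅ := by
  refine Set.eq_empty_of_forall_notMem fun q ⟨s, hs, hnext⟩ => ?_
  obtain ⟨a, ha⟩ := hA
  obtain ⟨lam, hlam⟩ := M.exists_inOut_of_isIrStrat hs q
  exact hnext lam ⟨a, ha, q, (M.sim_equiv a).refl q, hlam⟩

theorem lfpSet_know_union_next_eq_empty {a : M.Agt} {P : Set M.St} (hP : M.Know a P = ∅) :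
    lfpSet (fun X => M.Know a P ∪ M.Next {a} X) = ∅ :=
  lfpSet_eq_empty_of_map_empty <| by
    rw [hP, M.next_empty (Set.singleton_nonempty a), Set.empty_union]

end CEGS

def blindCEGS : CEGS where
  Agt := Unit
  St := Bool
  AP := Empty
  Act := Unit
  agtFin := inferInstance
  agtNe := inferInstance
  stNe := inferInstance
  actFin := inferInstance
  actNe := inferInstance
  V := Empty.elim
  d := fun _ _ => {()}
  d_ne := fun _ _ => Set.singleton_nonempty ()
  o := fun _ _ => true
  sim := fun _ _ _ => True
  sim_equiv := fun _ => ⟨fun _ => trivial, fun _ => trivial, fun _ _ => trivial⟩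
  uniform := fun _ _ _ _ => rfl

namespace blindCEGS

theorem isIrStrat (A : Set blindCEGS.Agt) : blindCEGS.IsIrStrat A fun _ _ => () :=
  fun _ _ => ⟨fun _ => rfl, fun _ _ _ => rfl⟩

theorem canReach_true (a : blindCEGS.Agt) (q : blindCEGS.St) :
    blindCEGS.CanReach {a} {true} q := by
  refine ⟨_, isIrStrat _, fun lam ⟨_, _, _, _, _, hstep⟩ => ⟨1, ?_⟩⟩
  obtain ⟨_, _, _, h1⟩ := hstep 0
  exact h1

theorem know_true_eq_empty (a : blindCEGS.Agt) : blindCEGS.Know a {true} = ∅ :=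
  Set.eq_empty_of_forall_notMem fun _ hq => Bool.false_ne_true (hq false trivial)

end blindCEGS

/-- the converse of the singleton-coalition lower bound does not
universally hold. -/
theorem singleton_fixpoint_lower_bound_not_tight :
    ∃ (M : CEGS) (a : M.Agt) (P : Set M.St) (q : M.St),
      M.CanReach {a} P q ∧ q ∉ lfpSet (fun X => M.Know a P ∪ M.Next {a} X) := by
  refine ⟨blindCEGS, (), {true}, false, blindCEGS.canReach_true _ false, fun hq => ?_⟩
  have hlfp := blindCEGS.lfpSet_know_union_next_eq_empty (blindCEGS.know_true_eq_empty ())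
  exact Set.notMem_empty false (hlfp ▸ hq)
end

section
/- For every n ≥ 2 there exist a concurrent epistemic game structure M, a coalition A with |A| = n, a set of states P ⊆ St, and a state q such that q belongs to the least fixpoint of the monotone operator X ↦ E_A P ∪ ⟨A⟩X, yet M,q ⊭ ⟨⟨A⟩⟩◇P. (For coalitions of size greater than one, the fixpoint μZ.(E_A φ ∨ ⟨A⟩Z) is not a lower bound for ⟨⟨A⟩⟩◇φ.) -/
/-!
The fixpoint only asks for one step of play at a time, so it may use a different one-step
strategy at each unfolding, whereas an ir-strategy is a single memoryless uniform choice. In the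
model below agent `0` cannot tell state `1` from `2` and agent `1` cannot tell `0` from `1`. From
state `1` the coalition can force state `0` (everybody plays `false`), and from `0` it can force
the goal `3` (everybody plays `true`), so `1 ∈ ⟨A⟩⟨A⟩E_A P`. But agent `1` must play the same
action at `0` and `1`, and whatever the coalition commits to, one of the states `0`, `1`, `2`,
all indistinguishable from `1` for some member, loops forever outside the goal.
-/

theorem map_lfpSet {σ : Type} {f : Set σ → Set σ} (hf : Monotone f) : f (lfpSet f) = lfpSet f :=
  OrderHom.map_lfp ⟨f, hf⟩

namespace CEGS

variable {M : CEGS}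

theorem next_mono (A : Set M.Agt) : Monotone (M.Next A) := by
  rintro X Y hXY q ⟨s, hs, hX⟩
  exact ⟨s, hs, fun lam hlam => hXY (hX lam hlam)⟩

theorem inOut_univ_iff {s : M.Agt → M.St → M.Act} (hs : M.IsIrStrat Set.univ s) {q : M.St}
    {lam : ℕ → M.St} :
    M.InOut Set.univ s q lam ↔
      lam 0 = q ∧ ∀ i, lam (i + 1) = M.o (lam i) fun a => s a (lam i) := by
  refine and_congr_right fun _ => forall_congr' fun i => ⟨?_, fun hstep => ?_⟩
  · rintro ⟨α, -, hα, hstep⟩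
    rwa [show α = fun a => s a (lam i) from funext fun a => hα a trivial] at hstep
  · exact ⟨_, fun a => (hs a trivial).1 _, fun _ _ => rfl, hstep⟩

theorem mem_next_univ {X : Set M.St} {q : M.St} {s : M.Agt → M.St → M.Act}
    (hs : M.IsIrStrat Set.univ s)
    (h : ∀ q', M.simE Set.univ q q' → (M.o q' fun a => s a q') ∈ X) :
    q ∈ M.Next Set.univ X := by
  refine ⟨s, hs, ?_⟩
  rintro lam ⟨a, -, q', hq', hlam⟩
  obtain ⟨rfl, hstep⟩ := (inOut_univ_iff hs).1 hlam
  rw [hstep 0]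
  exact h _ ⟨a, trivial, hq'⟩

theorem not_canReach_univ {P : Set M.St} {q : M.St}
    (h : ∀ s, M.IsIrStrat Set.univ s →
      ∃ q', M.simE Set.univ q q' ∧ q' ∉ P ∧ (M.o q' fun a => s a q') = q') :
    ¬ M.CanReach Set.univ P q := by
  rintro ⟨s, hs, hreach⟩
  obtain ⟨q', ⟨a, -, hq'⟩, hq'P, hloop⟩ := h s hs
  obtain ⟨i, hi⟩ := hreach (fun _ => q')
    ⟨a, trivial, q', hq', (inOut_univ_iff hs).2 ⟨rfl, fun _ => hloop.symm⟩⟩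
  exact hq'P hi

end CEGS

namespace FixpointCounterexample

def obsA (q : Fin 4) : Fin 4 := if q = 2 then 1 else q

def obsB (q : Fin 4) : Fin 4 := if q = 1 then 0 else q

def obs {m : ℕ} (a : Fin (m + 2)) (q : Fin 4) : Fin 4 :=
  if a = 0 then obsA q else if a = 1 then obsB q else q

def step (q : Fin 4) (a b : Bool) : Fin 4 :=
  match q, a, b with
  | 0, _, b => if b then 3 else 0
  | 1, a, b => if b then (if a then 3 else 1) else 0
  | 2, a, _ => if a then 2 else 0
  | _, _, _ => 3

-- reducible, so that `Fin` numerals elaborate at types `(model m).Agt` and `(model m).St`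
abbrev model (m : ℕ) : CEGS where
  Agt := Fin (m + 2)
  St := Fin 4
  AP := Empty
  Act := Bool
  agtFin := inferInstance
  agtNe := inferInstance
  stNe := inferInstance
  actFin := inferInstance
  actNe := inferInstance
  V := Empty.elim
  d _ _ := Set.univ
  d_ne _ _ := Set.univ_nonempty
  o q α := step q (α 0) (α 1)
  sim a q q' := obs a q = obs a q'
  sim_equiv _ := ⟨fun _ => rfl, Eq.symm, Eq.trans⟩
  uniform _ _ _ _ := rfl

variable {m : ℕ}

theorem simE_univ_iff {q q' : Fin 4} :
    (model m).simE Set.univ q q' ↔ obsA q = obsA q' ∨ obsB q = obsB q' := by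
  constructor
  · rintro ⟨a, -, h⟩
    change obs a q = obs a q' at h
    unfold obs at h
    split_ifs at h
    exacts [Or.inl h, Or.inr h, Or.inl (congrArg obsA h)]
  · rintro (h | h)
    · exact ⟨0, trivial, by simpa [model, obs] using h⟩
    · exact ⟨1, trivial, by simpa [model, obs] using h⟩

theorem isIrStrat_const (c : Bool) : (model m).IsIrStrat Set.univ fun _ _ => c :=
  fun _ _ => ⟨fun _ => trivial, fun _ _ _ => rfl⟩

theorem three_mem_eKnow : (3 : Fin 4) ∈ (model m).EKnow Set.univ {3} := fun q' h =>
  (by decide : ∀ q' : Fin 4, obsA 3 = obsA q' ∨ obsB 3 = obsB q' → q' = 3) q' (simE_univ_iff.1 h)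

theorem zero_mem_next : (0 : Fin 4) ∈ (model m).Next Set.univ {3} :=
  CEGS.mem_next_univ (isIrStrat_const true) fun q' h =>
    (by decide : ∀ q' : Fin 4, obsA 0 = obsA q' ∨ obsB 0 = obsB q' → step q' true true = 3)
      q' (simE_univ_iff.1 h)

theorem one_mem_next : (1 : Fin 4) ∈ (model m).Next Set.univ {0} :=
  CEGS.mem_next_univ (isIrStrat_const false) fun q' h =>
    (by decide : ∀ q' : Fin 4, obsA 1 = obsA q' ∨ obsB 1 = obsB q' → step q' false false = 0)
      q' (simE_univ_iff.1 h)

theorem one_mem_lfpSet :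
    (1 : Fin 4) ∈ lfpSet fun X => (model m).EKnow Set.univ {3} ∪ (model m).Next Set.univ X := by
  set L := lfpSet fun X => (model m).EKnow Set.univ {3} ∪ (model m).Next Set.univ X
  have hL : (model m).EKnow Set.univ {3} ∪ (model m).Next Set.univ L = L :=
    map_lfpSet fun _ _ h => Set.union_subset_union_right _ (CEGS.next_mono _ h)
  have h3 : (3 : Fin 4) ∈ L := hL ▸ Or.inl three_mem_eKnow
  have h0 : (0 : Fin 4) ∈ L :=
    hL ▸ Or.inr (CEGS.next_mono _ (Set.singleton_subset_iff.2 h3) zero_mem_next)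
  exact hL ▸ Or.inr (CEGS.next_mono _ (Set.singleton_subset_iff.2 h0) one_mem_next)

theorem not_canReach_one : ¬ (model m).CanReach Set.univ {3} (1 : Fin 4) := by
  refine CEGS.not_canReach_univ fun s hs => ?_
  have hA : s 0 2 = s 0 1 := (hs 0 trivial).2 2 1 (by simp [obs, obsA])
  have hB : s 1 0 = s 1 1 := (hs 1 trivial).2 0 1 (by simp [obs, obsB])
  cases hb : s 1 1
  · exact ⟨0, simE_univ_iff.2 (by simp [obsA, obsB]), by simp, by simp [step, hB, hb]⟩
  cases ha : s 0 1
  · exact ⟨1, simE_univ_iff.2 (by simp [obsA, obsB]), by simp, by simp [step, ha, hb]⟩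
  · exact ⟨2, simE_univ_iff.2 (by simp [obsA, obsB]), by simp, by simp [step, hA, ha]⟩

end FixpointCounterexample

/-- for every coalition size `n ≥ 2`, the fixpoint `μX.(E_A P ∪ ⟨A⟩X)`
is not a lower bound for `⟨⟨A⟩⟩◇P`. -/
theorem big_coalition_fixpoint_not_lower_bound (n : ℕ) (hn : 2 ≤ n) :
    ∃ (M : CEGS) (A : Set M.Agt) (P : Set M.St) (q : M.St),
      A.ncard = n ∧
      q ∈ lfpSet (fun X => M.EKnow A P ∪ M.Next A X) ∧
      ¬ M.CanReach A P q := by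
  obtain ⟨m, rfl⟩ : ∃ m, n = m + 2 := ⟨n - 2, by omega⟩
  exact ⟨FixpointCounterexample.model m, Set.univ, {3}, 1, by simp,
    FixpointCounterexample.one_mem_lfpSet, FixpointCounterexample.not_canReach_one⟩
end

section
/- For every concurrent epistemic game structure M, every coalition A ⊆ Agt, every set of states P ⊆ St, and every state q: if q belongs to the least fixpoint of the monotone operator X ↦ E_A P ∪ ⟨A⟩•X (where ⟨A⟩• is the steadfast next-step operator), then M,q ⊨ ⟨⟨A⟩⟩◇P. (The fixpoint μZ.(E_A φ ∨ ⟨A⟩•Z) is a universal lower bound for ⟨⟨A⟩⟩◇φ.) -/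
open OrdinalApprox

lemma OrdinalApprox.exists_lt_of_mem_lfpApprox {α : Type} {f : Set α →o Set α} {γ : Ordinal}
    {x : α} (hx : x ∈ lfpApprox f ⊥ γ) : ∃ δ < γ, x ∈ f (lfpApprox f ⊥ δ) := by
  rw [lfpApprox] at hx
  simpa only [Set.bot_eq_empty, Set.sup_eq_union, Set.empty_union, Set.iSup_eq_iUnion,
    Set.mem_iUnion, exists_prop] using hx

namespace CEGS

variable {M : CEGS} {A : Set M.Agt} {a : M.Agt} {q x : M.St}

lemma simE_symm (h : M.simE A q x) : M.simE A x q := by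
  obtain ⟨a, ha, hq⟩ := h
  exact ⟨a, ha, (M.sim_equiv a).symm hq⟩

instance : Std.Symm (M.simE A) := ⟨fun _ _ => simE_symm⟩

lemma simC_symm (h : M.simC A q x) : M.simC A x q :=
  Std.Symm.symm (r := Relation.TransGen (M.simE A)) _ _ h

lemma simC_refl (ha : a ∈ A) (q : M.St) : M.simC A q q :=
  .single ⟨a, ha, (M.sim_equiv a).refl q⟩

lemma simC_of_sim (ha : a ∈ A) (h : M.sim a q x) : M.simC A q x :=
  .single ⟨a, ha, h⟩

lemma setOf_simC_eq (h : M.simC A q x) : {y | M.simC A q y} = {y | M.simC A x y} := by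
  ext y
  exact ⟨(simC_symm h).trans, h.trans⟩

lemma mem_nextStead_of_simC {X : Set M.St} (hq : q ∈ M.NextStead A X) (h : M.simC A q x) :
    x ∈ M.NextStead A X := by
  obtain ⟨s, hs, hreach⟩ := hq
  exact ⟨s, hs, by rwa [← setOf_simC_eq h]⟩

variable (M) in
noncomputable def defaultStrat : M.Agt → M.St → M.Act :=
  fun a q => haveI := M.actNe; Classical.epsilon (· ∈ M.d a q)

lemma defaultStrat_mem (a : M.Agt) (q : M.St) : M.defaultStrat a q ∈ M.d a q :=
  Classical.epsilon_spec (M.d_ne a q)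

variable (A) in
lemma isIrStrat_defaultStrat : M.IsIrStrat A M.defaultStrat :=
  fun a _ => ⟨defaultStrat_mem a, fun q q' h => by simp only [defaultStrat, M.uniform a q q' h]⟩

lemma IsIrStrat.isIrStratPI {s : M.Agt → M.St → M.Act} (hs : M.IsIrStrat A s) :
    M.IsIrStratPI A s :=
  fun a ha => (hs a ha).1

section Plays

variable {s σ : M.Agt → M.St → M.Act} {lam mu : ℕ → M.St}

variable (M) in
def Step (A : Set M.Agt) (s : M.Agt → M.St → M.Act) (x y : M.St) : Prop :=
  ∃ α, M.Avail x α ∧ (∀ a ∈ A, α a = s a x) ∧ y = M.o x α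

lemma Step.of_eqOn {y : M.St} (h : M.Step A s x y) (hsσ : ∀ a ∈ A, s a x = σ a x) :
    M.Step A σ x y := by
  obtain ⟨α, hα, hαs, rfl⟩ := h
  exact ⟨α, hα, fun a ha => (hαs a ha).trans (hsσ a ha), rfl⟩

lemma exists_step (hs : M.IsIrStratPI A s) (x : M.St) : ∃ y, M.Step A s x y := by
  classical
  refine ⟨_, fun a => if a ∈ A then s a x else M.defaultStrat a x, fun a => ?_,
    fun a ha => if_pos ha, rfl⟩
  by_cases ha : a ∈ A
  · simpa only [if_pos ha] using hs a ha x
  · simpa only [if_neg ha] using defaultStrat_mem a x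

lemma exists_inOut (hs : M.IsIrStratPI A s) (x : M.St) : ∃ lam, M.InOut A s x lam := by
  choose next hnext using exists_step hs
  refine ⟨fun n => next^[n] x, rfl, fun i => ?_⟩
  show M.Step A s (next^[i] x) (next^[i + 1] x)
  rw [Function.iterate_succ_apply']
  exact hnext _

lemma InOut.shift (h : M.InOut A s q lam) (i : ℕ) :
    M.InOut A s (lam i) (fun n => lam (i + n)) :=
  ⟨rfl, fun n => h.2 (i + n)⟩

lemma inOut_splice {m : ℕ} (h0 : lam 0 = q) (hlam : ∀ i < m, M.Step A s (lam i) (lam (i + 1)))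
    (hmu : M.InOut A s (lam m) mu) :
    M.InOut A s q (fun n => if n ≤ m then lam n else mu (n - m)) := by
  refine ⟨by simpa using h0, fun n => ?_⟩
  rcases lt_trichotomy n m with hn | rfl | hn
  · simp only [if_pos hn.le, if_pos (Nat.succ_le_of_lt hn)]
    exact hlam n hn
  · have := hmu.2 0
    simp only [hmu.1] at this
    simpa using this
  · have hsub : n + 1 - m = n - m + 1 := by omega
    simp only [if_neg hn.not_ge, if_neg (by omega : ¬n + 1 ≤ m), hsub]
    exact hmu.2 (n - m)

/-- A play leaving `Q` before reaching `X` is cut at its exit from `Q` and continued with `σ`. -/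
lemma reachSet_subset_of_eqOn {Q X : Set M.St} (hσ : M.IsIrStratPI A σ)
    (hsσ : ∀ a ∈ A, ∀ x ∈ Q, s a x = σ a x) :
    M.ReachSet A σ Q X ⊆ M.ReachSet A s Q X := by
  classical
  rintro q ⟨hq, hreach⟩
  refine ⟨hq, fun lam hlam => ?_⟩
  have hstepσ : ∀ i, lam i ∈ Q → M.Step A σ (lam i) (lam (i + 1)) :=
    fun i hi => Step.of_eqOn (hlam.2 i) fun a ha => hsσ a ha _ hi
  by_cases hstay : ∀ i, lam i ∈ Q
  · exact hreach lam ⟨hlam.1, fun i => hstepσ i (hstay i)⟩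
  replace hstay : ∃ i, lam i ∉ Q := not_forall.1 hstay
  set m := Nat.find hstay
  have hexit : lam m ∉ Q := Nat.find_spec hstay
  have hbefore : ∀ j < m, lam j ∈ Q := fun j hj => not_not.1 (Nat.find_min hstay hj)
  obtain ⟨mu, hmu⟩ := exists_inOut hσ (lam m)
  have hspliced := inOut_splice hlam.1 (fun i hi => hstepσ i (hbefore i hi)) hmu
  obtain ⟨i, hiX, hiQ⟩ := hreach _ hspliced
  have hagree : ∀ n ≤ m, (if n ≤ m then lam n else mu (n - m)) = lam n := fun n hn => if_pos hn
  have him : i ≤ m := by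
    by_contra! hmi
    exact hexit (hagree m le_rfl ▸ hiQ m hmi)
  exact ⟨i, hagree i him ▸ hiX, fun j hj => hagree j (by omega) ▸ hiQ j hj⟩

end Plays

section Gluing

variable (A) (X : Ordinal.{0} → Set M.St)

noncomputable def steadRank (C : Set M.St) : Ordinal :=
  sInf {γ | ∃ s, M.IsIrStrat A s ∧ M.ReachSet A s C (X γ) = C}

open Classical in
noncomputable def rankStrat (C : Set M.St) : M.Agt → M.St → M.Act :=
  if h : ∃ s, M.IsIrStrat A s ∧ M.ReachSet A s C (X (steadRank A X C)) = C then h.choose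
  else M.defaultStrat

noncomputable def gluedStrat : M.Agt → M.St → M.Act :=
  fun a x => rankStrat A X {y | M.simC A x y} a x

variable {A X} {C : Set M.St} {γ : Ordinal} {s : M.Agt → M.St → M.Act}

lemma isIrStrat_rankStrat : M.IsIrStrat A (rankStrat A X C) := by
  unfold rankStrat
  split_ifs with h
  · exact h.choose_spec.1
  · exact isIrStrat_defaultStrat A

lemma steadRank_le (hs : M.IsIrStrat A s) (h : M.ReachSet A s C (X γ) = C) :
    steadRank A X C ≤ γ :=
  csInf_le' ⟨s, hs, h⟩

lemma reachSet_rankStrat (hs : M.IsIrStrat A s) (h : M.ReachSet A s C (X γ) = C) :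
    M.ReachSet A (rankStrat A X C) C (X (steadRank A X C)) = C := by
  have hex : ∃ s, M.IsIrStrat A s ∧ M.ReachSet A s C (X (steadRank A X C)) = C :=
    csInf_mem (s := {γ | ∃ s, M.IsIrStrat A s ∧ M.ReachSet A s C (X γ) = C}) ⟨γ, s, hs, h⟩
  rw [rankStrat, dif_pos hex]
  exact hex.choose_spec.2

lemma gluedStrat_eq_rankStrat (h : M.simC A q x) (a : M.Agt) :
    gluedStrat A X a x = rankStrat A X {y | M.simC A q y} a x := by
  rw [gluedStrat, setOf_simC_eq h]

lemma isIrStrat_gluedStrat : M.IsIrStrat A (gluedStrat A X) := by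
  intro a ha
  refine ⟨fun x => (isIrStrat_rankStrat a ha).1 x, fun x x' h => ?_⟩
  rw [gluedStrat_eq_rankStrat (simC_refl ha x), gluedStrat_eq_rankStrat (simC_of_sim ha h)]
  exact (isIrStrat_rankStrat a ha).2 x x' h

lemma exists_reach_gluedStrat (ha : a ∈ A) {δ : Ordinal} (hq : q ∈ M.NextStead A (X δ)) :
    ∃ γ ≤ δ, q ∈ M.ReachSet A (gluedStrat A X) {y | M.simC A q y} (X γ) := by
  obtain ⟨s, hs, hreach⟩ := hq
  set C := {y | M.simC A q y}
  have hq : q ∈ M.ReachSet A (rankStrat A X C) C (X (steadRank A X C)) := by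
    rw [reachSet_rankStrat hs hreach]
    exact simC_refl ha q
  exact ⟨_, steadRank_le hs hreach, reachSet_subset_of_eqOn isIrStrat_rankStrat.isIrStratPI
    (fun b _ x hx => gluedStrat_eq_rankStrat hx b) hq⟩

end Gluing

section Fixpoint

variable (A) (P : Set M.St)

noncomputable def steadOp : Set M.St →o Set M.St where
  toFun X := M.EKnow A P ∪ M.NextStead A X
  monotone' X Y hXY := by
    refine Set.union_subset_union_right _ fun q ⟨s, hs, hreach⟩ => ⟨s, hs, ?_⟩
    refine (Set.sep_subset _ _).antisymm fun x hx => ?_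
    obtain ⟨hxQ, hx⟩ := hreach.symm ▸ hx
    exact ⟨hxQ, fun lam hlam => (hx lam hlam).imp fun _ ⟨hX, hQ⟩ => ⟨hXY hX, hQ⟩⟩

variable {A P} {δ : Ordinal}

lemma exists_mem_of_inOut_gluedStrat (ha : a ∈ A)
    (hq : q ∈ steadOp A P (lfpApprox (steadOp A P) ⊥ δ)) {lam : ℕ → M.St}
    (hlam : M.InOut A (gluedStrat A (lfpApprox (steadOp A P) ⊥)) q lam) : ∃ i, lam i ∈ P := by
  induction δ using WellFoundedLT.induction generalizing q lam with
  | ind δ ih =>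
    rcases hq with hP | hN
    · exact ⟨0, hlam.1 ▸ hP q ⟨a, ha, (M.sim_equiv a).refl q⟩⟩
    obtain ⟨γ, hγδ, -, hreach⟩ := exists_reach_gluedStrat ha hN
    obtain ⟨i, hi, -⟩ := hreach lam hlam
    obtain ⟨ε, hεγ, hiF⟩ := exists_lt_of_mem_lfpApprox hi
    obtain ⟨n, hn⟩ := ih ε (hεγ.trans_le hγδ) hiF (hlam.shift i)
    exact ⟨i + n, hn⟩

lemma canReach_of_mem_steadOp_lfpApprox (hq : q ∈ steadOp A P (lfpApprox (steadOp A P) ⊥ δ)) :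
    M.CanReach A P q := by
  refine ⟨gluedStrat A (lfpApprox (steadOp A P) ⊥), isIrStrat_gluedStrat, ?_⟩
  rintro lam ⟨a, ha, q', hqq', hlam⟩
  rcases hq with hP | hN
  · exact ⟨0, hlam.1 ▸ hP q' ⟨a, ha, hqq'⟩⟩
  · exact exists_mem_of_inOut_gluedStrat ha
      (Or.inr (mem_nextStead_of_simC hN (simC_of_sim ha hqq'))) hlam

end Fixpoint

end CEGS

/-- the steadfast fixpoint `μX.(E_A P ∪ ⟨A⟩•X)` is a universal lower
bound for `⟨⟨A⟩⟩◇P`. -/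
theorem steadfast_fixpoint_lower_bound (M : CEGS) (A : Set M.Agt) (P : Set M.St)
    (q : M.St) (h : q ∈ lfpSet (fun X => M.EKnow A P ∪ M.NextStead A X)) :
    M.CanReach A P q := by
  have hlfp : q ∈ lfpApprox (CEGS.steadOp A P) ⊥ (Order.succ (Cardinal.mk (Set M.St))).ord := by
    rwa [lfpApprox_ord_eq_lfp]
  obtain ⟨δ, -, hq⟩ := exists_lt_of_mem_lfpApprox hlfp
  exact CEGS.canReach_of_mem_steadOp_lfpApprox hq
end
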